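/- Let k be a field and u ∈ k with u ≠ 0. Let R = k[t, t⁻¹] be the Laurent polynomial ring over k, let w : R → R be the k-algebra involution determined by w(t) = t⁻¹, and let R^w be the subring of w-invariants. Let a₁, a₂ ∈ k and let C : R → R be an R^w-linear map satisfying C(1) = a₁·1 and C(u·t) = a₂·u·t (such a C exists and is unique, since {1, u·t} is an R^w-basis of R). Then C is triangular with respect to the Macdonald ordering on the monomial basis (t^j)_{j ∈ ℤ}: for every j ∈ ℤ, C(t^j) − c_j·t^j lies in the k-linear span of {t^i : i ⊏ j}, where c_j = a₂ if j ≥ 1 and c_j = a₁ if j ≤ 0, and the strict relation ⊏ on ℤ is defined by: i ⊏ j iff either (|i| < |j| and |j| − |i| is even) or (|i| = |j| and i > 0 > j). -/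
import Mathlib

/-- The strict Macdonald order `i ⊏ j` on `ℤ = ℤω₁`:
either `|i| < |j|` with `|j| − |i|` even, or `|i| = |j|` with `i > 0 > j`. -/
def macLtZ (i j : ℤ) : Prop :=
  (|i| < |j| ∧ Even (|j| - |i|)) ∨ (|i| = |j| ∧ 0 < i ∧ j < 0)

private lemma macA (n : ℕ) : macLtZ (-(n : ℤ)) ((n : ℤ) + 2) := by
  left
  rw [abs_neg, abs_of_nonneg (by positivity : (0:ℤ) ≤ (n:ℤ)),
    abs_of_nonneg (by positivity : (0:ℤ) ≤ (n:ℤ) + 2)]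
  exact ⟨by omega, ⟨1, by ring⟩⟩

private lemma macB (n : ℕ) (hn : 1 ≤ n) : macLtZ (n : ℤ) (-(n : ℤ)) := by
  right
  rw [abs_neg]
  exact ⟨rfl, by exact_mod_cast hn, by omega⟩

private lemma macC (n : ℕ) {i : ℤ} (h : macLtZ i (-(n : ℤ))) : macLtZ i ((n : ℤ) + 2) := by
  have hn : |(n : ℤ)| = (n : ℤ) := abs_of_nonneg (by positivity)
  have hn2 : |((n : ℤ) + 2)| = (n : ℤ) + 2 := abs_of_nonneg (by positivity)
  rcases h with ⟨h1, h2⟩ | ⟨h1, h2, h3⟩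
  · rw [abs_neg, hn] at h1 h2
    left
    rw [hn2]
    refine ⟨by omega, ?_⟩
    have : (n : ℤ) + 2 - |i| = ((n : ℤ) - |i|) + 2 := by ring
    rw [this]
    exact h2.add even_two
  · rw [abs_neg, hn] at h1
    left
    rw [hn2, h1]
    exact ⟨by omega, ⟨1, by ring⟩⟩

private lemma macD (n : ℕ) {i : ℤ} (h : macLtZ i (n : ℤ)) : macLtZ i (-(n : ℤ)) := by
  rcases h with ⟨h1, h2⟩ | ⟨h1, h2, h3⟩
  · left; rw [abs_neg]; exact ⟨h1, h2⟩
  · exact absurd h3 (by omega)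

/-- Let `R = k[t, t⁻¹]`, `w` the `k`-algebra involution with
`w(t^j) = t^{−j}`, and `C : R → R` an `R^w`-linear map with `C(1) = a₁·1` and
`C(u·t) = a₂·u·t` (for `u ≠ 0` in `k`). Then `C` is triangular with respect to the
Macdonald ordering on the monomials `t^j`: `C(t^j) − c_j·t^j` lies in the span of
`{t^i : i ⊏ j}`, where `c_j = a₂` for `j ≥ 1` and `c_j = a₁` for `j ≤ 0`. -/
theorem laurent_invariant_linear_map_triangular
    (k : Type*) [Field k] (u : k) (hu : u ≠ 0)
    (w : LaurentPolynomial k →ₐ[k] LaurentPolynomial k)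
    (hw : ∀ j : ℤ, w (LaurentPolynomial.T j) = LaurentPolynomial.T (-j))
    (a₁ a₂ : k)
    (C : LaurentPolynomial k →ₗ[k] LaurentPolynomial k)
    (hClin : ∀ f g : LaurentPolynomial k, w f = f → C (f * g) = f * C g)
    (hC1 : C 1 = a₁ • (1 : LaurentPolynomial k))
    (hCt : C (u • LaurentPolynomial.T 1) = a₂ • (u • LaurentPolynomial.T 1)) :
    ∀ j : ℤ,
      C (LaurentPolynomial.T j) - (if 1 ≤ j then a₂ else a₁) • LaurentPolynomial.T j ∈
        Submodule.span k
          {q : LaurentPolynomial k | ∃ i : ℤ, macLtZ i j ∧ q = LaurentPolynomial.T i} := by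
  classical
  set T : ℤ → LaurentPolynomial k := fun j => LaurentPolynomial.T j with hTdef
  set S : ℤ → Submodule k (LaurentPolynomial k) := fun j =>
    Submodule.span k {q : LaurentPolynomial k | ∃ i : ℤ, macLtZ i j ∧ q = T i} with hSdef
  -- C(T 1) = a₂ • T 1
  have hCT1 : C (T 1) = a₂ • T 1 := by
    have h := hCt
    rw [map_smul, smul_comm a₂ u] at h
    exact smul_right_injective (LaurentPolynomial k) hu h
  -- invariance of T m + T (-m)
  have key : ∀ (m : ℤ) (g : LaurentPolynomial k),
      C ((T m + T (-m)) * g) = (T m + T (-m)) * C g := by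
    intro m g
    refine hClin _ g ?_
    rw [map_add, hw, hw, neg_neg, add_comm]
  have rel1 : ∀ m : ℤ, C (T m) + C (T (-m)) = a₁ • T m + a₁ • T (-m) := by
    intro m
    have h := key m 1
    rw [mul_one, map_add, hC1, mul_smul_comm, mul_one, smul_add] at h
    exact h
  have rel2 : ∀ m : ℤ, C (T (m + 1)) + C (T (-m + 1)) = a₂ • T (m + 1) + a₂ • T (-m + 1) := by
    intro m
    have h := key m (T 1)
    have e1 : T m * T 1 = T (m + 1) := (LaurentPolynomial.T_add m 1).symm
    have e2 : T (-m) * T 1 = T (-m + 1) := (LaurentPolynomial.T_add (-m) 1).symm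
    rw [hCT1, mul_smul_comm, add_mul, e1, e2, map_add, smul_add] at h
    exact h
  -- positive part by strong induction
  have pos : ∀ n : ℕ, C (T (n : ℤ)) - (if 1 ≤ (n : ℤ) then a₂ else a₁) • T (n : ℤ) ∈ S (n : ℤ) := by
    intro n
    induction n using Nat.strong_induction_on with
    | _ n ih =>
      match n with
      | 0 =>
        have : C (T ((0 : ℕ) : ℤ)) - (if 1 ≤ ((0 : ℕ) : ℤ) then a₂ else a₁) • T ((0 : ℕ) : ℤ) = 0 := by
          simp only [Nat.cast_zero, if_neg (by omega : ¬ (1 : ℤ) ≤ 0)]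
          simp [hTdef, LaurentPolynomial.T_zero, hC1]
        rw [this]; exact zero_mem _
      | 1 =>
        have : C (T ((1 : ℕ) : ℤ)) - (if 1 ≤ ((1 : ℕ) : ℤ) then a₂ else a₁) • T ((1 : ℕ) : ℤ) = 0 := by
          simp only [Nat.cast_one, if_pos (le_refl (1:ℤ))]
          rw [hCT1]; abel
        rw [this]; exact zero_mem _
      | (m + 2) =>
        -- derive negative statement at m
        have posm := ih m (by omega)
        have negm : C (T (-(m : ℤ))) - a₁ • T (-(m : ℤ)) ∈ S (-(m : ℤ)) := by
          match m with
          | 0 =>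
            have h0 := posm
            simp only [Nat.cast_zero, if_neg (by omega : ¬ (1 : ℤ) ≤ 0)] at h0
            simpa using h0
          | (p + 1) =>
            have hif : (if 1 ≤ ((p + 1 : ℕ) : ℤ) then a₂ else a₁) = a₂ := if_pos (by exact_mod_cast Nat.succ_le_succ (Nat.zero_le p))
            rw [hif] at posm
            have h0 : C (T (-((p+1 : ℕ) : ℤ))) =
                a₁ • T (((p+1 : ℕ)) : ℤ) + a₁ • T (-((p+1 : ℕ) : ℤ)) - C (T (((p+1 : ℕ)) : ℤ)) :=
              eq_sub_of_add_eq (by rw [add_comm]; exact rel1 _)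
            have h1 : C (T (-((p+1 : ℕ) : ℤ))) - a₁ • T (-((p+1 : ℕ) : ℤ)) =
                (a₁ - a₂) • T (((p+1 : ℕ)) : ℤ) -
                  (C (T (((p+1 : ℕ)) : ℤ)) - a₂ • T (((p+1 : ℕ)) : ℤ)) := by
              rw [h0, sub_smul]; abel
            rw [h1]
            refine Submodule.sub_mem _ ?_ ?_
            · exact Submodule.smul_mem _ _ (Submodule.subset_span ⟨_, macB (p+1) (by omega), rfl⟩)
            · refine Submodule.span_mono ?_ posm
              rintro q ⟨i, hi, rfl⟩
              exact ⟨i, macD (p+1) hi, rfl⟩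
        -- now the positive statement at m+2
        have hcast : ((m + 2 : ℕ) : ℤ) = (m : ℤ) + 2 := by push_cast; ring
        have hif : (if 1 ≤ ((m + 2 : ℕ) : ℤ) then a₂ else a₁) = a₂ := if_pos (by omega)
        rw [hif, hcast]
        have hr := rel2 ((m : ℤ) + 1)
        have e1 : (m : ℤ) + 1 + 1 = (m : ℤ) + 2 := by ring
        have e2 : -((m : ℤ) + 1) + 1 = -(m : ℤ) := by ring
        rw [e1, e2] at hr
        have h0 : C (T ((m : ℤ) + 2)) =
            a₂ • T ((m : ℤ) + 2) + a₂ • T (-(m : ℤ)) - C (T (-(m : ℤ))) :=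
          eq_sub_of_add_eq hr
        have h1 : C (T ((m : ℤ) + 2)) - a₂ • T ((m : ℤ) + 2) =
            (a₂ - a₁) • T (-(m : ℤ)) - (C (T (-(m : ℤ))) - a₁ • T (-(m : ℤ))) := by
          rw [h0, sub_smul]; abel
        rw [h1]
        refine Submodule.sub_mem _ ?_ ?_
        · exact Submodule.smul_mem _ _ (Submodule.subset_span ⟨_, macA m, rfl⟩)
        · refine Submodule.span_mono ?_ negm
          rintro q ⟨i, hi, rfl⟩
          exact ⟨i, macC m hi, rfl⟩
  -- negative part from positive
  have neg : ∀ n : ℕ, C (T (-(n : ℤ))) - a₁ • T (-(n : ℤ)) ∈ S (-(n : ℤ)) := by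
    intro n
    match n with
    | 0 =>
      have h0 := pos 0
      simp only [Nat.cast_zero, if_neg (by omega : ¬ (1 : ℤ) ≤ 0)] at h0
      simpa using h0
    | (p + 1) =>
      have posm := pos (p + 1)
      have hif : (if 1 ≤ ((p + 1 : ℕ) : ℤ) then a₂ else a₁) = a₂ := if_pos (by exact_mod_cast Nat.succ_le_succ (Nat.zero_le p))
      rw [hif] at posm
      have h0 : C (T (-((p+1 : ℕ) : ℤ))) =
          a₁ • T (((p+1 : ℕ)) : ℤ) + a₁ • T (-((p+1 : ℕ) : ℤ)) - C (T (((p+1 : ℕ)) : ℤ)) :=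
        eq_sub_of_add_eq (by rw [add_comm]; exact rel1 _)
      have h1 : C (T (-((p+1 : ℕ) : ℤ))) - a₁ • T (-((p+1 : ℕ) : ℤ)) =
          (a₁ - a₂) • T (((p+1 : ℕ)) : ℤ) -
            (C (T (((p+1 : ℕ)) : ℤ)) - a₂ • T (((p+1 : ℕ)) : ℤ)) := by
        rw [h0, sub_smul]; abel
      rw [h1]
      refine Submodule.sub_mem _ ?_ ?_
      · exact Submodule.smul_mem _ _ (Submodule.subset_span ⟨_, macB (p+1) (by omega), rfl⟩)
      · refine Submodule.span_mono ?_ posm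
        rintro q ⟨i, hi, rfl⟩
        exact ⟨i, macD (p+1) hi, rfl⟩
  -- assemble
  intro j
  rcases le_or_gt 0 j with hj | hj
  · obtain ⟨n, rfl⟩ := Int.eq_ofNat_of_zero_le hj
    exact pos n
  · obtain ⟨n, rfl⟩ := Int.exists_eq_neg_ofNat hj.le
    have hif : (if 1 ≤ -(n : ℤ) then a₂ else a₁) = a₁ := if_neg (by omega)
    rw [hif]
    exact neg n
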